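/- The m × m matrix M := I_m + (q − q^{−1})DA over 𝒜, whose entries are μ(l^i_j) = δ^i_j + (q − q^{−1}) Σ_k ∂^i_k a^k_j, satisfies the reflection equation M₂ R₂₁ M₁ R = R₂₁ M₁ R M₂, where R := R[m]. Consequently the assignment l^i_j ↦ M^i_j defines a homomorphism of algebras from the reflection equation algebra on m² generators to 𝒜 (the quantum moment map μ^e_v at the head vertex of a non-loop edge). -/
import Mathlib


open Matrix Kronecker

noncomputable section

/-- Coefficient matrix of the R-matrix `R[N]` on `k^N ⊗ k^N`: the entry in
row `(i,j)`, column `(s,t)` is `q^{δ_{ij}} δ_{is} δ_{jt} + (q-q⁻¹) θ(i-j) δ_{it} δ_{js}`,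
where `θ(x) = 1` if `x > 0` and `0` otherwise. -/
def Rmat (k : Type) [Field k] (q : k) (N : ℕ) :
    Matrix (Fin N × Fin N) (Fin N × Fin N) k :=
  Matrix.of fun p r =>
    (if p.1 = p.2 then q else 1) * (if p = r then 1 else 0)
      + (q - q⁻¹) * ((if p.2 < p.1 then (1 : k) else 0) *
          (if p.1 = r.2 ∧ p.2 = r.1 then 1 else 0))

/-- The explicit inverse of `R[N]`:
`(R⁻¹)^{ij}_{st} = q^{-δ_{ij}} δ_{is} δ_{jt} - (q-q⁻¹) θ(i-j) δ_{it} δ_{js}`. -/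
def RmatInv (k : Type) [Field k] (q : k) (N : ℕ) :
    Matrix (Fin N × Fin N) (Fin N × Fin N) k :=
  Matrix.of fun p r =>
    (if p.1 = p.2 then q⁻¹ else 1) * (if p = r then 1 else 0)
      - (q - q⁻¹) * ((if p.2 < p.1 then (1 : k) else 0) *
          (if p.1 = r.2 ∧ p.2 = r.1 then 1 else 0))


variable {B : Type*} [Ring B]

/-- general flip matrix -/
def genFlip (B : Type*) [Ring B] (α β : Type*) [DecidableEq α] [DecidableEq β] :
    Matrix (β × α) (α × β) B :=
  Matrix.of fun p r => if p.1 = r.2 ∧ p.2 = r.1 then 1 else 0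

/-- swap both tensor legs (conjugation by flip, as a reindexing) -/
def swM {α β γ δ : Type*} (M : Matrix (α × β) (γ × δ) B) : Matrix (β × α) (δ × γ) B :=
  Matrix.of fun p r => M (p.2, p.1) (r.2, r.1)

variable {α β γ δ ε ζ : Type*}

lemma swM_mul [Fintype γ] [Fintype δ] (M : Matrix (α × β) (γ × δ) B)
    (N : Matrix (γ × δ) (ε × ζ) B) : swM (M * N) = swM M * swM N := by
  ext p r
  simp only [swM, Matrix.of_apply, Matrix.mul_apply]
  exact (Fintype.sum_equiv (Equiv.prodComm δ γ)
    (fun s => M (p.2, p.1) (s.2, s.1) * N (s.2, s.1) (r.2, r.1))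
    (fun s => M (p.2, p.1) s * N s (r.2, r.1)) (fun s => rfl)).symm

lemma swM_one [DecidableEq α] [DecidableEq β] : swM (1 : Matrix (α × β) (α × β) B) = 1 := by
  ext ⟨a, b⟩ ⟨c, d⟩
  simp only [swM, Matrix.of_apply, Matrix.one_apply, Prod.ext_iff]
  exact if_congr and_comm rfl rfl

lemma swM_add (M N : Matrix (α × β) (γ × δ) B) : swM (M + N) = swM M + swM N := rfl

lemma swM_sub (M N : Matrix (α × β) (γ × δ) B) : swM (M - N) = swM M - swM N := rfl

omit [Ring B] in
lemma swM_map {C : Type*} (f : B → C) (M : Matrix (α × β) (γ × δ) B) :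
    swM (M.map f) = (swM M).map f := rfl

lemma swM_one_kron [DecidableEq γ] (X : Matrix α β B) :
    swM ((1 : Matrix γ γ B) ⊗ₖ X) = X ⊗ₖ (1 : Matrix γ γ B) := by
  ext p r
  simp only [swM, Matrix.of_apply, kroneckerMap_apply, Matrix.one_apply]
  split <;> simp

lemma swM_kron_one [DecidableEq γ] (X : Matrix α β B) :
    swM (X ⊗ₖ (1 : Matrix γ γ B)) = (1 : Matrix γ γ B) ⊗ₖ X := by
  ext p r
  simp only [swM, Matrix.of_apply, kroneckerMap_apply, Matrix.one_apply]
  split <;> simp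

lemma swM_genFlip [DecidableEq α] [DecidableEq β] :
    swM (genFlip B α β) = genFlip B β α := by
  ext p r
  simp only [swM, genFlip, Matrix.of_apply]
  exact if_congr and_comm rfl rfl

lemma genFlip_mul [DecidableEq α] [DecidableEq β] [Fintype α] [Fintype β]
    (M : Matrix (α × β) (ε × ζ) B) (p : β × α) (r : ε × ζ) :
    (genFlip B α β * M) p r = M (p.2, p.1) r := by
  rw [Matrix.mul_apply, Finset.sum_eq_single (p.2, p.1)]
  · simp [genFlip]
  · intro s _ hs
    have : ¬ (p.1 = s.2 ∧ p.2 = s.1) := by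
      rintro ⟨h1, h2⟩; exact hs (Prod.ext h2.symm h1.symm)
    simp [genFlip, this]
  · simp

lemma mul_genFlip [DecidableEq α] [DecidableEq β] [Fintype α] [Fintype β]
    (M : Matrix (ε × ζ) (β × α) B) (p : ε × ζ) (r : α × β) :
    (M * genFlip B α β) p r = M p (r.2, r.1) := by
  rw [Matrix.mul_apply, Finset.sum_eq_single (r.2, r.1)]
  · simp [genFlip]
  · intro s _ hs
    have : ¬ (s.1 = r.2 ∧ s.2 = r.1) := by
      rintro ⟨h1, h2⟩; exact hs (Prod.ext h1 h2)
    simp [genFlip, this]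
  · simp

-- F1 : (1_γ ⊗ X) * flip = flip * (X ⊗ 1_γ)
lemma one_kron_mul_genFlip [DecidableEq α] [DecidableEq β] [DecidableEq γ]
    [Fintype α] [Fintype β] [Fintype γ] (X : Matrix β α B) :
    ((1 : Matrix γ γ B) ⊗ₖ X) * genFlip B α γ = genFlip B β γ * (X ⊗ₖ (1 : Matrix γ γ B)) := by
  ext p r
  rw [mul_genFlip, genFlip_mul]
  simp only [kroneckerMap_apply, Matrix.one_apply]
  split <;> simp

-- F2 : (X ⊗ 1_γ) * flip = flip * (1_γ ⊗ X)
lemma kron_one_mul_genFlip [DecidableEq α] [DecidableEq β] [DecidableEq γ]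
    [Fintype α] [Fintype β] [Fintype γ] (X : Matrix β α B) :
    (X ⊗ₖ (1 : Matrix γ γ B)) * genFlip B γ α = genFlip B γ β * ((1 : Matrix γ γ B) ⊗ₖ X) := by
  ext p r
  rw [mul_genFlip, genFlip_mul]
  simp only [kroneckerMap_apply, Matrix.one_apply]
  split <;> simp

lemma kron_one_mul_kron_one [DecidableEq γ] [Fintype γ] [Fintype β]
    (X : Matrix α β B) (Y : Matrix β δ B) :
    (X ⊗ₖ (1 : Matrix γ γ B)) * (Y ⊗ₖ (1 : Matrix γ γ B)) = (X * Y) ⊗ₖ (1 : Matrix γ γ B) := by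
  ext p r
  simp only [Matrix.mul_apply, kroneckerMap_apply, Matrix.one_apply, Fintype.sum_prod_type,
    mul_ite, mul_zero, mul_one, ite_mul, zero_mul]
  simp [Finset.sum_ite_eq' , Finset.sum_ite_eq, Matrix.mul_apply]

lemma one_kron_mul_one_kron [DecidableEq γ] [Fintype γ] [Fintype β]
    (X : Matrix α β B) (Y : Matrix β δ B) :
    ((1 : Matrix γ γ B) ⊗ₖ X) * ((1 : Matrix γ γ B) ⊗ₖ Y) = (1 : Matrix γ γ B) ⊗ₖ (X * Y) := by
  ext p r
  simp only [Matrix.mul_apply, kroneckerMap_apply, Matrix.one_apply, Fintype.sum_prod_type,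
    mul_ite, mul_zero, mul_one, ite_mul, zero_mul]
  simp [Finset.sum_ite_eq', Finset.sum_ite_eq, Matrix.mul_apply]


lemma map_one_kron {R S : Type*} [Ring R] [Ring S] {α β γ : Type*} [DecidableEq γ]
    (f : R → S) (h0 : f 0 = 0) (X : Matrix α β R) :
    (((1 : Matrix γ γ R) ⊗ₖ X).map f) = (1 : Matrix γ γ S) ⊗ₖ (X.map f) := by
  ext p r
  simp [Matrix.map_apply, Matrix.one_apply, ite_mul, one_mul, zero_mul, apply_ite f, h0]

lemma map_kron_one {R S : Type*} [Ring R] [Ring S] {α β γ : Type*} [DecidableEq γ]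
    (f : R → S) (h0 : f 0 = 0) (X : Matrix α β R) :
    ((X ⊗ₖ (1 : Matrix γ γ R)).map f) = (X.map f) ⊗ₖ (1 : Matrix γ γ S) := by
  ext p r
  simp [Matrix.map_apply, Matrix.one_apply, mul_ite, mul_one, mul_zero, apply_ite f, h0]

section ScalarLemmas

variable {k : Type} [Field k]

lemma sumTwoDelta {ι : Type*} [Fintype ι] [DecidableEq ι] (p p' : ι) (a b : k) (g : ι → k) :
    (∑ s, ((if s = p then a else 0) + (if s = p' then b else 0)) * g s) = a * g p + b * g p' := by
  simp [add_mul, Finset.sum_add_distrib, ite_mul]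

lemma pair_cond {N : ℕ} (p s : Fin N × Fin N) :
    (p.1 = s.2 ∧ p.2 = s.1) ↔ s = (p.2, p.1) := by
  constructor
  · rintro ⟨h1, h2⟩; exact Prod.ext h2.symm h1.symm
  · rintro rfl; exact ⟨rfl, rfl⟩

lemma Rmat_row (q : k) {N : ℕ} (p s : Fin N × Fin N) :
    Rmat k q N p s = (if s = p then (if p.1 = p.2 then q else 1) else 0)
      + (if s = (p.2, p.1) then (q - q⁻¹) * (if p.2 < p.1 then 1 else 0) else 0) := by
  simp only [Rmat, Matrix.of_apply]
  congr 1
  · by_cases h : s = p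
    · simp [h]
    · have h' : p ≠ s := fun hh => h hh.symm
      simp [h, h']
  · by_cases h : s = (p.2, p.1)
    · subst h
      simp
    · have hc : ¬(p.1 = s.2 ∧ p.2 = s.1) := fun hc => h ((pair_cond p s).1 hc)
      simp [h, hc]

lemma RmatInv_row (q : k) {N : ℕ} (p s : Fin N × Fin N) :
    RmatInv k q N p s = (if s = p then (if p.1 = p.2 then q⁻¹ else 1) else 0)
      + (if s = (p.2, p.1) then -((q - q⁻¹) * (if p.2 < p.1 then 1 else 0)) else 0) := by
  simp only [RmatInv, Matrix.of_apply, sub_eq_add_neg]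
  congr 1
  · by_cases h : s = p
    · simp [h]
    · have h' : p ≠ s := fun hh => h hh.symm
      simp [h, h']
  · by_cases h : s = (p.2, p.1)
    · subst h
      simp
    · have hc : ¬(p.1 = s.2 ∧ p.2 = s.1) := fun hc => h ((pair_cond p s).1 hc)
      simp [h, hc]

lemma Rmat_mul_RmatInv (q : k) (hq : q ≠ 0) (N : ℕ) :
    Rmat k q N * RmatInv k q N = 1 := by
  ext p r
  rw [Matrix.mul_apply]
  simp_rw [Rmat_row q p]
  rw [sumTwoDelta, RmatInv_row, RmatInv_row, Matrix.one_apply]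
  obtain ⟨i, j⟩ := p
  obtain ⟨s, t⟩ := r
  simp only [Prod.mk.injEq]
  have hqq : q * q⁻¹ = 1 := mul_inv_cancel₀ hq
  rcases lt_trichotomy i j with h | h | h
  · simp [h.ne, h.ne', lt_asymm h, eq_comm]
  · subst h
    simp [lt_irrefl, eq_comm, mul_ite, ite_mul, hqq]
  · simp only [h, h.ne', lt_asymm h, if_true, if_false, ite_false, ite_true, ne_eq,
      not_false_eq_true, one_mul, mul_one, mul_zero, zero_mul, neg_zero, add_zero, zero_add,
      if_neg (lt_asymm h), if_neg h.ne']
    simp [eq_comm]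
    split_ifs <;> first | (exfalso; omega) | ring

lemma RmatInv_mul_Rmat (q : k) (hq : q ≠ 0) (N : ℕ) :
    RmatInv k q N * Rmat k q N = 1 := by
  ext p r
  rw [Matrix.mul_apply]
  simp_rw [RmatInv_row q p]
  rw [sumTwoDelta, Rmat_row, Rmat_row, Matrix.one_apply]
  obtain ⟨i, j⟩ := p
  obtain ⟨s, t⟩ := r
  simp only [Prod.mk.injEq]
  have hqq : q⁻¹ * q = 1 := inv_mul_cancel₀ hq
  rcases lt_trichotomy i j with h | h | h
  · simp [h.ne, h.ne', lt_asymm h, eq_comm]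
  · subst h
    simp [lt_irrefl, eq_comm, mul_ite, ite_mul, hqq]
  · simp only [h, h.ne', lt_asymm h, if_true, if_false, ite_false, ite_true, ne_eq,
      not_false_eq_true, one_mul, mul_one, mul_zero, zero_mul, neg_zero, add_zero, zero_add,
      if_neg (lt_asymm h), if_neg h.ne']
    simp [eq_comm]
    split_ifs <;> first | (exfalso; omega) | ring

lemma Rmat_row_sw (q : k) {N : ℕ} (p s : Fin N × Fin N) :
    Rmat k q N (p.2, p.1) (s.2, s.1) = (if s = p then (if p.2 = p.1 then q else 1) else 0)
      + (if s = (p.2, p.1) then (q - q⁻¹) * (if p.1 < p.2 then 1 else 0) else 0) := by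
  rw [Rmat_row]
  congr 1
  · congr 1
    apply propext
    constructor
    · intro hc
      exact Prod.ext (congrArg Prod.snd hc) (congrArg Prod.fst hc)
    · rintro rfl; rfl
  · congr 1
    apply propext
    constructor
    · intro hc
      exact Prod.ext (congrArg Prod.snd hc) (congrArg Prod.fst hc)
    · rintro rfl; rfl

lemma hecke_k (q : k) (hq : q ≠ 0) (N : ℕ) :
    swM (Rmat k q N) * Rmat k q N
      = 1 + (q - q⁻¹) • (genFlip k (Fin N) (Fin N) * Rmat k q N) := by
  ext p r
  rw [Matrix.mul_apply]
  simp only [swM, Matrix.of_apply]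
  simp_rw [Rmat_row_sw q p]
  rw [sumTwoDelta, Matrix.add_apply, Matrix.smul_apply, Matrix.one_apply, genFlip_mul,
    smul_eq_mul]
  rw [Rmat_row, Rmat_row]
  obtain ⟨i, j⟩ := p
  obtain ⟨s, t⟩ := r
  simp only [Prod.mk.injEq]
  have hqq : q * q⁻¹ = 1 := mul_inv_cancel₀ hq
  rcases lt_trichotomy i j with h | h | h
  · simp only [h, h.ne, h.ne', lt_asymm h, if_true, if_false]
    simp [eq_comm]
    all_goals split_ifs <;> first | (exfalso; omega) | ring
  · subst h
    simp only [lt_irrefl, if_false]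
    simp [eq_comm, mul_ite, ite_mul]
    all_goals split_ifs <;> first | (exfalso; omega) | (field_simp; try ring)
  · simp only [h, h.ne, h.ne', lt_asymm h, if_true, if_false]
    simp [eq_comm]
    all_goals split_ifs <;> first | (exfalso; omega) | ring

end ScalarLemmas

variable (k : Type) [Field k] (𝒜 : Type) [Ring 𝒜] [Algebra k 𝒜]

/-- `R[N]` regarded as a matrix over the `k`-algebra `𝒜`. -/
def RA (q : k) (N : ℕ) : Matrix (Fin N × Fin N) (Fin N × Fin N) 𝒜 :=
  (Rmat k q N).map (algebraMap k 𝒜)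

/-- `R[N]₂₁ := τ ∘ R[N] ∘ τ` regarded as a matrix over `𝒜`. -/
def RA21 (q : k) (N : ℕ) : Matrix (Fin N × Fin N) (Fin N × Fin N) 𝒜 :=
  Matrix.of fun p r => RA k 𝒜 q N (p.2, p.1) (r.2, r.1)

/-- `(R[N])⁻¹` regarded as a matrix over `𝒜`. -/
def RAinv (q : k) (N : ℕ) : Matrix (Fin N × Fin N) (Fin N × Fin N) 𝒜 :=
  (RmatInv k q N).map (algebraMap k 𝒜)

/-- `(R[N]₂₁)⁻¹ = (R[N]⁻¹)₂₁` regarded as a matrix over `𝒜`. -/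
def RAinv21 (q : k) (N : ℕ) : Matrix (Fin N × Fin N) (Fin N × Fin N) 𝒜 :=
  Matrix.of fun p r => RAinv k 𝒜 q N (p.2, p.1) (r.2, r.1)

/-- The flip `τ : k^m ⊗ k^n → k^n ⊗ k^m` as a matrix over `𝒜`. -/
def flipA (m n : ℕ) : Matrix (Fin n × Fin m) (Fin m × Fin n) 𝒜 :=
  Matrix.of fun p r => if p.1 = r.2 ∧ p.2 = r.1 then 1 else 0

/-- The defining relations (M1), (M2), (M3) of the quantized edge algebra `𝒟_q(e)`
of the Kronecker quiver with tail dimension `n` and head dimension `m`, for an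
`n × m` matrix `A` and an `m × n` matrix `D` over `𝒜`:
(M1) `R[n] A₂ A₁ = A₁ A₂ R[m]₂₁`, (M2) `R[m] D₂ D₁ = D₁ D₂ R[n]₂₁`,
(M3) `D₂ (R[n])⁻¹ A₁ = A₁ R[m] D₂ + τ`. -/
def EdgeRel (q : k) {n m : ℕ}
    (A : Matrix (Fin n) (Fin m) 𝒜) (D : Matrix (Fin m) (Fin n) 𝒜) : Prop :=
  RA k 𝒜 q n * ((1 : Matrix (Fin n) (Fin n) 𝒜) ⊗ₖ A) * (A ⊗ₖ (1 : Matrix (Fin m) (Fin m) 𝒜))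
      = (A ⊗ₖ (1 : Matrix (Fin n) (Fin n) 𝒜)) * ((1 : Matrix (Fin m) (Fin m) 𝒜) ⊗ₖ A)
          * RA21 k 𝒜 q m
    ∧ RA k 𝒜 q m * ((1 : Matrix (Fin m) (Fin m) 𝒜) ⊗ₖ D) * (D ⊗ₖ (1 : Matrix (Fin n) (Fin n) 𝒜))
      = (D ⊗ₖ (1 : Matrix (Fin m) (Fin m) 𝒜)) * ((1 : Matrix (Fin n) (Fin n) 𝒜) ⊗ₖ D)
          * RA21 k 𝒜 q n
    ∧ ((1 : Matrix (Fin n) (Fin n) 𝒜) ⊗ₖ D) * RAinv k 𝒜 q n * (A ⊗ₖ (1 : Matrix (Fin n) (Fin n) 𝒜))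
      = (A ⊗ₖ (1 : Matrix (Fin m) (Fin m) 𝒜)) * RA k 𝒜 q m * ((1 : Matrix (Fin m) (Fin m) 𝒜) ⊗ₖ D)
          + flipA 𝒜 m n

/-- The defining relations (L1), (L2), (L3) of the quantized loop edge algebra `𝒟_q(e)`
at a vertex of dimension `N`, with `R := R[N]`:
(L1) `R₂₁ A₁ R A₂ = A₂ R₂₁ A₁ R`, (L2) `R₂₁ D₁ R D₂ = D₂ R₂₁ D₁ R`,
(L3) `R₂₁ D₁ R A₂ = A₂ R₂₁ D₁ R₂₁⁻¹`. -/
def LoopRel (q : k) {N : ℕ} (A D : Matrix (Fin N) (Fin N) 𝒜) : Prop :=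
  RA21 k 𝒜 q N * (A ⊗ₖ (1 : Matrix (Fin N) (Fin N) 𝒜)) * RA k 𝒜 q N
        * ((1 : Matrix (Fin N) (Fin N) 𝒜) ⊗ₖ A)
      = ((1 : Matrix (Fin N) (Fin N) 𝒜) ⊗ₖ A) * RA21 k 𝒜 q N
        * (A ⊗ₖ (1 : Matrix (Fin N) (Fin N) 𝒜)) * RA k 𝒜 q N
    ∧ RA21 k 𝒜 q N * (D ⊗ₖ (1 : Matrix (Fin N) (Fin N) 𝒜)) * RA k 𝒜 q N
        * ((1 : Matrix (Fin N) (Fin N) 𝒜) ⊗ₖ D)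
      = ((1 : Matrix (Fin N) (Fin N) 𝒜) ⊗ₖ D) * RA21 k 𝒜 q N
        * (D ⊗ₖ (1 : Matrix (Fin N) (Fin N) 𝒜)) * RA k 𝒜 q N
    ∧ RA21 k 𝒜 q N * (D ⊗ₖ (1 : Matrix (Fin N) (Fin N) 𝒜)) * RA k 𝒜 q N
        * ((1 : Matrix (Fin N) (Fin N) 𝒜) ⊗ₖ A)
      = ((1 : Matrix (Fin N) (Fin N) 𝒜) ⊗ₖ A) * RA21 k 𝒜 q N
        * (D ⊗ₖ (1 : Matrix (Fin N) (Fin N) 𝒜)) * RAinv21 k 𝒜 q N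


section ALevel

variable {k : Type} [Field k] {𝒜 : Type} [Ring 𝒜] [Algebra k 𝒜]

lemma map_matrix_smul (c : k) {α β : Type*} (M : Matrix α β k) :
    (c • M).map (algebraMap k 𝒜) = c • (M.map (algebraMap k 𝒜)) := by
  ext p r
  simp [Algebra.smul_def, Matrix.map_apply]

lemma genFlip_map {α β : Type*} [DecidableEq α] [DecidableEq β] :
    (genFlip k α β).map (algebraMap k 𝒜) = genFlip 𝒜 α β := by
  ext p r
  simp [genFlip, Matrix.map_apply, apply_ite (algebraMap k 𝒜)]

lemma RA21_eq_swM (q : k) (N : ℕ) : RA21 k 𝒜 q N = swM (RA k 𝒜 q N) := rfl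

lemma RAinv21_eq_swM (q : k) (N : ℕ) : RAinv21 k 𝒜 q N = swM (RAinv k 𝒜 q N) := rfl

lemma swM_RA21 (q : k) (N : ℕ) : swM (RA21 k 𝒜 q N) = RA k 𝒜 q N := by
  ext p r
  simp [RA21, swM]

lemma swM_RAinv21 (q : k) (N : ℕ) : swM (RAinv21 k 𝒜 q N) = RAinv k 𝒜 q N := by
  ext p r
  simp [RAinv21, swM]

lemma RA_mul_RAinv (q : k) (hq : q ≠ 0) (N : ℕ) :
    RA k 𝒜 q N * RAinv k 𝒜 q N = 1 := by
  rw [RA, RAinv, ← Matrix.map_mul (f := algebraMap k 𝒜), Rmat_mul_RmatInv q hq,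
    Matrix.map_one _ (map_zero _) (map_one _)]

lemma RAinv_mul_RA (q : k) (hq : q ≠ 0) (N : ℕ) :
    RAinv k 𝒜 q N * RA k 𝒜 q N = 1 := by
  rw [RA, RAinv, ← Matrix.map_mul (f := algebraMap k 𝒜), RmatInv_mul_Rmat q hq,
    Matrix.map_one _ (map_zero _) (map_one _)]

lemma RAinv21_mul_RA21 (q : k) (hq : q ≠ 0) (N : ℕ) :
    RAinv21 k 𝒜 q N * RA21 k 𝒜 q N = 1 := by
  rw [RAinv21_eq_swM, RA21_eq_swM, ← swM_mul, RAinv_mul_RA q hq, swM_one]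

lemma hecke_A (q : k) (hq : q ≠ 0) (N : ℕ) :
    RA21 k 𝒜 q N * RA k 𝒜 q N
      = 1 + (q - q⁻¹) • (genFlip 𝒜 (Fin N) (Fin N) * RA k 𝒜 q N) := by
  have : RA21 k 𝒜 q N = (swM (Rmat k q N)).map (algebraMap k 𝒜) := rfl
  rw [this, RA, ← Matrix.map_mul (f := algebraMap k 𝒜), hecke_k q hq]
  ext p r
  rw [Matrix.map_apply, Matrix.add_apply, Matrix.add_apply, Matrix.smul_apply,
    Matrix.smul_apply, genFlip_mul, genFlip_mul, map_add]
  congr 1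
  · simp [Matrix.one_apply, apply_ite (algebraMap k 𝒜)]
  · simp [Algebra.smul_def, RA, Matrix.map_apply]

lemma RA21_mul_genFlip (q : k) (N : ℕ) :
    RA21 k 𝒜 q N * genFlip 𝒜 (Fin N) (Fin N) = genFlip 𝒜 (Fin N) (Fin N) * RA k 𝒜 q N := by
  ext p r
  rw [mul_genFlip, genFlip_mul]
  simp [RA21]

end ALevel

/-- The matrix `L = (l^i_j)` of generators of the free algebra on `m²` symbols. -/
def REgen (k : Type) [Field k] (m : ℕ) :
    Matrix (Fin m) (Fin m) (FreeAlgebra k (Fin m × Fin m)) :=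
  Matrix.of fun i j => FreeAlgebra.ι k (i, j)

/-- The reflection equation relations `L₂ R₂₁ L₁ R = R₂₁ L₁ R L₂` on the free algebra:
`x` is related to `y` when they are corresponding entries of the two sides. -/
def RERel (k : Type) [Field k] (q : k) (m : ℕ) :
    FreeAlgebra k (Fin m × Fin m) → FreeAlgebra k (Fin m × Fin m) → Prop :=
  fun x y => ∃ p r,
    x = (((1 : Matrix (Fin m) (Fin m) (FreeAlgebra k (Fin m × Fin m))) ⊗ₖ REgen k m)
          * RA21 k (FreeAlgebra k (Fin m × Fin m)) q m
          * (REgen k m ⊗ₖ (1 : Matrix (Fin m) (Fin m) (FreeAlgebra k (Fin m × Fin m))))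
          * RA k (FreeAlgebra k (Fin m × Fin m)) q m) p r
    ∧ y = (RA21 k (FreeAlgebra k (Fin m × Fin m)) q m
          * (REgen k m ⊗ₖ (1 : Matrix (Fin m) (Fin m) (FreeAlgebra k (Fin m × Fin m))))
          * RA k (FreeAlgebra k (Fin m × Fin m)) q m
          * ((1 : Matrix (Fin m) (Fin m) (FreeAlgebra k (Fin m × Fin m))) ⊗ₖ REgen k m)) p r

/-- The reflection equation algebra on `m²` generators `l^i_j`. -/
def REAlgebra (k : Type) [Field k] (q : k) (m : ℕ) : Type :=
  RingQuot (RERel k q m)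

noncomputable instance (k : Type) [Field k] (q : k) (m : ℕ) : Ring (REAlgebra k q m) :=
  inferInstanceAs (Ring (RingQuot (RERel k q m)))

noncomputable instance (k : Type) [Field k] (q : k) (m : ℕ) : Algebra k (REAlgebra k q m) :=
  inferInstanceAs (Algebra k (RingQuot (RERel k q m)))

set_option maxHeartbeats 2000000 in
/-- Given matrices `A` (n × m) and `D` (m × n) over `𝒜` satisfying the
defining relations of the quantized edge algebra `𝒟_q(e)`, the matrix
`M := I_m + (q - q⁻¹) D A`, with entries `μ(l^i_j) = δ^i_j + (q - q⁻¹) Σ_k ∂^i_k a^k_j`,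
satisfies the reflection equation `M₂ R₂₁ M₁ R = R₂₁ M₁ R M₂` with `R := R[m]`.
Consequently `l^i_j ↦ M^i_j` defines an algebra homomorphism from the reflection
equation algebra on `m²` generators to `𝒜` (the quantum moment map `μ^e_v` at the head
vertex of a non-loop edge). -/
theorem moment_map_head_vertex (q : k) (hq : q ≠ 0) {n m : ℕ}
    (A : Matrix (Fin n) (Fin m) 𝒜) (D : Matrix (Fin m) (Fin n) 𝒜)
    (hrel : EdgeRel k 𝒜 q A D) :
    (((1 : Matrix (Fin m) (Fin m) 𝒜) ⊗ₖ ((1 : Matrix (Fin m) (Fin m) 𝒜) + (q - q⁻¹) • (D * A)))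
        * RA21 k 𝒜 q m
        * (((1 : Matrix (Fin m) (Fin m) 𝒜) + (q - q⁻¹) • (D * A)) ⊗ₖ (1 : Matrix (Fin m) (Fin m) 𝒜))
        * RA k 𝒜 q m
      = RA21 k 𝒜 q m
        * (((1 : Matrix (Fin m) (Fin m) 𝒜) + (q - q⁻¹) • (D * A)) ⊗ₖ (1 : Matrix (Fin m) (Fin m) 𝒜))
        * RA k 𝒜 q m
        * ((1 : Matrix (Fin m) (Fin m) 𝒜) ⊗ₖ ((1 : Matrix (Fin m) (Fin m) 𝒜) + (q - q⁻¹) • (D * A))))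
    ∧ ∃ φ : REAlgebra k q m →ₐ[k] 𝒜, ∀ i j : Fin m,
        φ (RingQuot.mkAlgHom k (RERel k q m) (FreeAlgebra.ι k (i, j)))
          = ((1 : Matrix (Fin m) (Fin m) 𝒜) + (q - q⁻¹) • (D * A)) i j := by
  classical
  obtain ⟨h1, h2, h3⟩ := hrel
  have hflip : flipA 𝒜 m n = genFlip 𝒜 (Fin m) (Fin n) := rfl
  rw [hflip] at h3
  simp only [Matrix.mul_assoc] at h1 h2 h3
  have h1sw : RA21 k 𝒜 q n * ((A ⊗ₖ (1 : Matrix (Fin n) (Fin n) 𝒜)) * ((1 : Matrix (Fin m) (Fin m) 𝒜) ⊗ₖ A)) = ((1 : Matrix (Fin n) (Fin n) 𝒜) ⊗ₖ A) * ((A ⊗ₖ (1 : Matrix (Fin m) (Fin m) 𝒜)) * RA k 𝒜 q m) := by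
    have hh := congrArg swM h1
    simp only [swM_mul, swM_one_kron, swM_kron_one, swM_RA21, ← RA21_eq_swM] at hh
    exact hh
  have h2sw : RA21 k 𝒜 q m * ((D ⊗ₖ (1 : Matrix (Fin m) (Fin m) 𝒜)) * ((1 : Matrix (Fin n) (Fin n) 𝒜) ⊗ₖ D)) = ((1 : Matrix (Fin m) (Fin m) 𝒜) ⊗ₖ D) * ((D ⊗ₖ (1 : Matrix (Fin n) (Fin n) 𝒜)) * RA k 𝒜 q n) := by
    have hh := congrArg swM h2
    simp only [swM_mul, swM_one_kron, swM_kron_one, swM_RA21, ← RA21_eq_swM] at hh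
    exact hh
  have h3sw : (D ⊗ₖ (1 : Matrix (Fin n) (Fin n) 𝒜)) * (RAinv21 k 𝒜 q n * ((1 : Matrix (Fin n) (Fin n) 𝒜) ⊗ₖ A)) = ((1 : Matrix (Fin m) (Fin m) 𝒜) ⊗ₖ A) * (RA21 k 𝒜 q m * (D ⊗ₖ (1 : Matrix (Fin m) (Fin m) 𝒜))) + genFlip 𝒜 (Fin n) (Fin m) := by
    have hh := congrArg swM h3
    simp only [swM_mul, swM_add, swM_one_kron, swM_kron_one, swM_genFlip,
      ← RA21_eq_swM, ← RAinv21_eq_swM] at hh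
    exact hh
  have h3' : (A ⊗ₖ (1 : Matrix (Fin m) (Fin m) 𝒜)) * (RA k 𝒜 q m * ((1 : Matrix (Fin m) (Fin m) 𝒜) ⊗ₖ D)) = ((1 : Matrix (Fin n) (Fin n) 𝒜) ⊗ₖ D) * (RAinv k 𝒜 q n * (A ⊗ₖ (1 : Matrix (Fin n) (Fin n) 𝒜))) - genFlip 𝒜 (Fin m) (Fin n) :=
    eq_sub_of_add_eq h3.symm
  have h3sw' : ((1 : Matrix (Fin m) (Fin m) 𝒜) ⊗ₖ A) * (RA21 k 𝒜 q m * (D ⊗ₖ (1 : Matrix (Fin m) (Fin m) 𝒜))) = (D ⊗ₖ (1 : Matrix (Fin n) (Fin n) 𝒜)) * (RAinv21 k 𝒜 q n * ((1 : Matrix (Fin n) (Fin n) 𝒜) ⊗ₖ A)) - genFlip 𝒜 (Fin n) (Fin m) :=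
    eq_sub_of_add_eq h3sw.symm
  have cancel1 : RAinv21 k 𝒜 q n * (RA21 k 𝒜 q n * ((A ⊗ₖ (1 : Matrix (Fin n) (Fin n) 𝒜)) * ((1 : Matrix (Fin m) (Fin m) 𝒜) ⊗ₖ A))) = (A ⊗ₖ (1 : Matrix (Fin n) (Fin n) 𝒜)) * ((1 : Matrix (Fin m) (Fin m) 𝒜) ⊗ₖ A) := by
    rw [← Matrix.mul_assoc, RAinv21_mul_RA21 q hq n, Matrix.one_mul]
  have cancel2 : RA k 𝒜 q n * (RAinv k 𝒜 q n * ((A ⊗ₖ (1 : Matrix (Fin n) (Fin n) 𝒜)) * ((1 : Matrix (Fin m) (Fin m) 𝒜) ⊗ₖ A))) = (A ⊗ₖ (1 : Matrix (Fin n) (Fin n) 𝒜)) * ((1 : Matrix (Fin m) (Fin m) 𝒜) ⊗ₖ A) := by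
    rw [← Matrix.mul_assoc, RA_mul_RAinv q hq n, Matrix.one_mul]
  have e1 : ((1 : Matrix (Fin m) (Fin m) 𝒜) ⊗ₖ (D * A)) * (RA21 k 𝒜 q m * (((D * A) ⊗ₖ (1 : Matrix (Fin m) (Fin m) 𝒜)) * RA k 𝒜 q m))
      = ((1 : Matrix (Fin m) (Fin m) 𝒜) ⊗ₖ D) * ((D ⊗ₖ (1 : Matrix (Fin n) (Fin n) 𝒜)) * (RAinv21 k 𝒜 q n * (((1 : Matrix (Fin n) (Fin n) 𝒜) ⊗ₖ A) * ((A ⊗ₖ (1 : Matrix (Fin m) (Fin m) 𝒜)) * RA k 𝒜 q m)))) - genFlip 𝒜 (Fin m) (Fin m) * (((D * A) ⊗ₖ (1 : Matrix (Fin m) (Fin m) 𝒜)) * RA k 𝒜 q m) := by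
    calc ((1 : Matrix (Fin m) (Fin m) 𝒜) ⊗ₖ (D * A)) * (RA21 k 𝒜 q m * (((D * A) ⊗ₖ (1 : Matrix (Fin m) (Fin m) 𝒜)) * RA k 𝒜 q m))
        = ((1 : Matrix (Fin m) (Fin m) 𝒜) ⊗ₖ D) * ((((1 : Matrix (Fin m) (Fin m) 𝒜) ⊗ₖ A) * (RA21 k 𝒜 q m * (D ⊗ₖ (1 : Matrix (Fin m) (Fin m) 𝒜)))) * ((A ⊗ₖ (1 : Matrix (Fin m) (Fin m) 𝒜)) * RA k 𝒜 q m)) := by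
          rw [← one_kron_mul_one_kron (γ := Fin m) D A,
            ← kron_one_mul_kron_one (γ := Fin m) D A]
          simp only [Matrix.mul_assoc]
      _ = ((1 : Matrix (Fin m) (Fin m) 𝒜) ⊗ₖ D) * (((D ⊗ₖ (1 : Matrix (Fin n) (Fin n) 𝒜)) * (RAinv21 k 𝒜 q n * ((1 : Matrix (Fin n) (Fin n) 𝒜) ⊗ₖ A)) - genFlip 𝒜 (Fin n) (Fin m)) * ((A ⊗ₖ (1 : Matrix (Fin m) (Fin m) 𝒜)) * RA k 𝒜 q m)) := by rw [h3sw']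
      _ = ((1 : Matrix (Fin m) (Fin m) 𝒜) ⊗ₖ D) * ((D ⊗ₖ (1 : Matrix (Fin n) (Fin n) 𝒜)) * (RAinv21 k 𝒜 q n * (((1 : Matrix (Fin n) (Fin n) 𝒜) ⊗ₖ A) * ((A ⊗ₖ (1 : Matrix (Fin m) (Fin m) 𝒜)) * RA k 𝒜 q m)))) - genFlip 𝒜 (Fin m) (Fin m) * (((D * A) ⊗ₖ (1 : Matrix (Fin m) (Fin m) 𝒜)) * RA k 𝒜 q m) := by
          rw [Matrix.sub_mul, Matrix.mul_sub]
          congr 1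
          · simp only [Matrix.mul_assoc]
          · rw [show ((1 : Matrix (Fin m) (Fin m) 𝒜) ⊗ₖ D) * (genFlip 𝒜 (Fin n) (Fin m) * ((A ⊗ₖ (1 : Matrix (Fin m) (Fin m) 𝒜)) * RA k 𝒜 q m))
                = (((1 : Matrix (Fin m) (Fin m) 𝒜) ⊗ₖ D) * genFlip 𝒜 (Fin n) (Fin m)) * ((A ⊗ₖ (1 : Matrix (Fin m) (Fin m) 𝒜)) * RA k 𝒜 q m) from (Matrix.mul_assoc _ _ _).symm,
              one_kron_mul_genFlip, ← kron_one_mul_kron_one (γ := Fin m) D A]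
            simp only [Matrix.mul_assoc]
  have e2 : ((D * A) ⊗ₖ (1 : Matrix (Fin m) (Fin m) 𝒜)) * (RA k 𝒜 q m * ((1 : Matrix (Fin m) (Fin m) 𝒜) ⊗ₖ (D * A)))
      = (D ⊗ₖ (1 : Matrix (Fin m) (Fin m) 𝒜)) * (((1 : Matrix (Fin n) (Fin n) 𝒜) ⊗ₖ D) * (RAinv k 𝒜 q n * ((A ⊗ₖ (1 : Matrix (Fin n) (Fin n) 𝒜)) * ((1 : Matrix (Fin m) (Fin m) 𝒜) ⊗ₖ A)))) - genFlip 𝒜 (Fin m) (Fin m) * ((1 : Matrix (Fin m) (Fin m) 𝒜) ⊗ₖ (D * A)) := by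
    calc ((D * A) ⊗ₖ (1 : Matrix (Fin m) (Fin m) 𝒜)) * (RA k 𝒜 q m * ((1 : Matrix (Fin m) (Fin m) 𝒜) ⊗ₖ (D * A)))
        = (D ⊗ₖ (1 : Matrix (Fin m) (Fin m) 𝒜)) * (((A ⊗ₖ (1 : Matrix (Fin m) (Fin m) 𝒜)) * (RA k 𝒜 q m * ((1 : Matrix (Fin m) (Fin m) 𝒜) ⊗ₖ D))) * ((1 : Matrix (Fin m) (Fin m) 𝒜) ⊗ₖ A)) := by
          rw [← one_kron_mul_one_kron (γ := Fin m) D A,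
            ← kron_one_mul_kron_one (γ := Fin m) D A]
          simp only [Matrix.mul_assoc]
      _ = (D ⊗ₖ (1 : Matrix (Fin m) (Fin m) 𝒜)) * ((((1 : Matrix (Fin n) (Fin n) 𝒜) ⊗ₖ D) * (RAinv k 𝒜 q n * (A ⊗ₖ (1 : Matrix (Fin n) (Fin n) 𝒜))) - genFlip 𝒜 (Fin m) (Fin n)) * ((1 : Matrix (Fin m) (Fin m) 𝒜) ⊗ₖ A)) := by rw [h3']
      _ = (D ⊗ₖ (1 : Matrix (Fin m) (Fin m) 𝒜)) * (((1 : Matrix (Fin n) (Fin n) 𝒜) ⊗ₖ D) * (RAinv k 𝒜 q n * ((A ⊗ₖ (1 : Matrix (Fin n) (Fin n) 𝒜)) * ((1 : Matrix (Fin m) (Fin m) 𝒜) ⊗ₖ A)))) - genFlip 𝒜 (Fin m) (Fin m) * ((1 : Matrix (Fin m) (Fin m) 𝒜) ⊗ₖ (D * A)) := by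
          rw [Matrix.sub_mul, Matrix.mul_sub]
          congr 1
          · simp only [Matrix.mul_assoc]
          · rw [show (D ⊗ₖ (1 : Matrix (Fin m) (Fin m) 𝒜)) * (genFlip 𝒜 (Fin m) (Fin n) * ((1 : Matrix (Fin m) (Fin m) 𝒜) ⊗ₖ A)) = ((D ⊗ₖ (1 : Matrix (Fin m) (Fin m) 𝒜)) * genFlip 𝒜 (Fin m) (Fin n)) * ((1 : Matrix (Fin m) (Fin m) 𝒜) ⊗ₖ A) from
                (Matrix.mul_assoc _ _ _).symm,
              kron_one_mul_genFlip, ← one_kron_mul_one_kron (γ := Fin m) D A]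
            simp only [Matrix.mul_assoc]
  have hUT : ((1 : Matrix (Fin m) (Fin m) 𝒜) ⊗ₖ (D * A)) * (genFlip 𝒜 (Fin m) (Fin m) * RA k 𝒜 q m) = genFlip 𝒜 (Fin m) (Fin m) * (((D * A) ⊗ₖ (1 : Matrix (Fin m) (Fin m) 𝒜)) * RA k 𝒜 q m) := by
    rw [← Matrix.mul_assoc, one_kron_mul_genFlip, Matrix.mul_assoc]
  have hK : ((1 : Matrix (Fin m) (Fin m) 𝒜) ⊗ₖ (D * A)) * (genFlip 𝒜 (Fin m) (Fin m) * RA k 𝒜 q m) + ((1 : Matrix (Fin m) (Fin m) 𝒜) ⊗ₖ (D * A)) * (RA21 k 𝒜 q m * (((D * A) ⊗ₖ (1 : Matrix (Fin m) (Fin m) 𝒜)) * RA k 𝒜 q m))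
      = (genFlip 𝒜 (Fin m) (Fin m) * RA k 𝒜 q m) * ((1 : Matrix (Fin m) (Fin m) 𝒜) ⊗ₖ (D * A)) + RA21 k 𝒜 q m * (((D * A) ⊗ₖ (1 : Matrix (Fin m) (Fin m) 𝒜)) * (RA k 𝒜 q m * ((1 : Matrix (Fin m) (Fin m) 𝒜) ⊗ₖ (D * A)))) := by
    have lhs_eq : ((1 : Matrix (Fin m) (Fin m) 𝒜) ⊗ₖ (D * A)) * (genFlip 𝒜 (Fin m) (Fin m) * RA k 𝒜 q m) + ((1 : Matrix (Fin m) (Fin m) 𝒜) ⊗ₖ (D * A)) * (RA21 k 𝒜 q m * (((D * A) ⊗ₖ (1 : Matrix (Fin m) (Fin m) 𝒜)) * RA k 𝒜 q m))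
        = ((1 : Matrix (Fin m) (Fin m) 𝒜) ⊗ₖ D) * ((D ⊗ₖ (1 : Matrix (Fin n) (Fin n) 𝒜)) * ((A ⊗ₖ (1 : Matrix (Fin n) (Fin n) 𝒜)) * ((1 : Matrix (Fin m) (Fin m) 𝒜) ⊗ₖ A))) := by
      calc ((1 : Matrix (Fin m) (Fin m) 𝒜) ⊗ₖ (D * A)) * (genFlip 𝒜 (Fin m) (Fin m) * RA k 𝒜 q m) + ((1 : Matrix (Fin m) (Fin m) 𝒜) ⊗ₖ (D * A)) * (RA21 k 𝒜 q m * (((D * A) ⊗ₖ (1 : Matrix (Fin m) (Fin m) 𝒜)) * RA k 𝒜 q m))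
          = genFlip 𝒜 (Fin m) (Fin m) * (((D * A) ⊗ₖ (1 : Matrix (Fin m) (Fin m) 𝒜)) * RA k 𝒜 q m)
            + (((1 : Matrix (Fin m) (Fin m) 𝒜) ⊗ₖ D) * ((D ⊗ₖ (1 : Matrix (Fin n) (Fin n) 𝒜)) * (RAinv21 k 𝒜 q n * (((1 : Matrix (Fin n) (Fin n) 𝒜) ⊗ₖ A) * ((A ⊗ₖ (1 : Matrix (Fin m) (Fin m) 𝒜)) * RA k 𝒜 q m))))
              - genFlip 𝒜 (Fin m) (Fin m) * (((D * A) ⊗ₖ (1 : Matrix (Fin m) (Fin m) 𝒜)) * RA k 𝒜 q m)) := by rw [hUT, e1]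
        _ = ((1 : Matrix (Fin m) (Fin m) 𝒜) ⊗ₖ D) * ((D ⊗ₖ (1 : Matrix (Fin n) (Fin n) 𝒜)) * (RAinv21 k 𝒜 q n * (((1 : Matrix (Fin n) (Fin n) 𝒜) ⊗ₖ A) * ((A ⊗ₖ (1 : Matrix (Fin m) (Fin m) 𝒜)) * RA k 𝒜 q m)))) := by abel
        _ = ((1 : Matrix (Fin m) (Fin m) 𝒜) ⊗ₖ D) * ((D ⊗ₖ (1 : Matrix (Fin n) (Fin n) 𝒜)) * (RAinv21 k 𝒜 q n * (RA21 k 𝒜 q n * ((A ⊗ₖ (1 : Matrix (Fin n) (Fin n) 𝒜)) * ((1 : Matrix (Fin m) (Fin m) 𝒜) ⊗ₖ A))))) := by rw [← h1sw]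
        _ = ((1 : Matrix (Fin m) (Fin m) 𝒜) ⊗ₖ D) * ((D ⊗ₖ (1 : Matrix (Fin n) (Fin n) 𝒜)) * ((A ⊗ₖ (1 : Matrix (Fin n) (Fin n) 𝒜)) * ((1 : Matrix (Fin m) (Fin m) 𝒜) ⊗ₖ A))) := by rw [cancel1]
    have rhs_eq : (genFlip 𝒜 (Fin m) (Fin m) * RA k 𝒜 q m) * ((1 : Matrix (Fin m) (Fin m) 𝒜) ⊗ₖ (D * A)) + RA21 k 𝒜 q m * (((D * A) ⊗ₖ (1 : Matrix (Fin m) (Fin m) 𝒜)) * (RA k 𝒜 q m * ((1 : Matrix (Fin m) (Fin m) 𝒜) ⊗ₖ (D * A))))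
        = ((1 : Matrix (Fin m) (Fin m) 𝒜) ⊗ₖ D) * ((D ⊗ₖ (1 : Matrix (Fin n) (Fin n) 𝒜)) * ((A ⊗ₖ (1 : Matrix (Fin n) (Fin n) 𝒜)) * ((1 : Matrix (Fin m) (Fin m) 𝒜) ⊗ₖ A))) := by
      calc (genFlip 𝒜 (Fin m) (Fin m) * RA k 𝒜 q m) * ((1 : Matrix (Fin m) (Fin m) 𝒜) ⊗ₖ (D * A)) + RA21 k 𝒜 q m * (((D * A) ⊗ₖ (1 : Matrix (Fin m) (Fin m) 𝒜)) * (RA k 𝒜 q m * ((1 : Matrix (Fin m) (Fin m) 𝒜) ⊗ₖ (D * A))))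
          = (genFlip 𝒜 (Fin m) (Fin m) * RA k 𝒜 q m) * ((1 : Matrix (Fin m) (Fin m) 𝒜) ⊗ₖ (D * A))
            + (RA21 k 𝒜 q m * ((D ⊗ₖ (1 : Matrix (Fin m) (Fin m) 𝒜)) * (((1 : Matrix (Fin n) (Fin n) 𝒜) ⊗ₖ D) * (RAinv k 𝒜 q n * ((A ⊗ₖ (1 : Matrix (Fin n) (Fin n) 𝒜)) * ((1 : Matrix (Fin m) (Fin m) 𝒜) ⊗ₖ A)))))
              - RA21 k 𝒜 q m * (genFlip 𝒜 (Fin m) (Fin m) * ((1 : Matrix (Fin m) (Fin m) 𝒜) ⊗ₖ (D * A)))) := by rw [e2, mul_sub]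
        _ = (genFlip 𝒜 (Fin m) (Fin m) * RA k 𝒜 q m) * ((1 : Matrix (Fin m) (Fin m) 𝒜) ⊗ₖ (D * A))
            + (RA21 k 𝒜 q m * ((D ⊗ₖ (1 : Matrix (Fin m) (Fin m) 𝒜)) * (((1 : Matrix (Fin n) (Fin n) 𝒜) ⊗ₖ D) * (RAinv k 𝒜 q n * ((A ⊗ₖ (1 : Matrix (Fin n) (Fin n) 𝒜)) * ((1 : Matrix (Fin m) (Fin m) 𝒜) ⊗ₖ A)))))
              - (genFlip 𝒜 (Fin m) (Fin m) * RA k 𝒜 q m) * ((1 : Matrix (Fin m) (Fin m) 𝒜) ⊗ₖ (D * A))) := by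
            rw [show RA21 k 𝒜 q m * (genFlip 𝒜 (Fin m) (Fin m) * ((1 : Matrix (Fin m) (Fin m) 𝒜) ⊗ₖ (D * A))) = (RA21 k 𝒜 q m * genFlip 𝒜 (Fin m) (Fin m)) * ((1 : Matrix (Fin m) (Fin m) 𝒜) ⊗ₖ (D * A)) from (Matrix.mul_assoc _ _ _).symm,
              RA21_mul_genFlip]
        _ = RA21 k 𝒜 q m * ((D ⊗ₖ (1 : Matrix (Fin m) (Fin m) 𝒜)) * (((1 : Matrix (Fin n) (Fin n) 𝒜) ⊗ₖ D) * (RAinv k 𝒜 q n * ((A ⊗ₖ (1 : Matrix (Fin n) (Fin n) 𝒜)) * ((1 : Matrix (Fin m) (Fin m) 𝒜) ⊗ₖ A))))) := by abel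
        _ = ((1 : Matrix (Fin m) (Fin m) 𝒜) ⊗ₖ D) * ((D ⊗ₖ (1 : Matrix (Fin n) (Fin n) 𝒜)) * (RA k 𝒜 q n * (RAinv k 𝒜 q n * ((A ⊗ₖ (1 : Matrix (Fin n) (Fin n) 𝒜)) * ((1 : Matrix (Fin m) (Fin m) 𝒜) ⊗ₖ A))))) := by
            rw [show RA21 k 𝒜 q m * ((D ⊗ₖ (1 : Matrix (Fin m) (Fin m) 𝒜)) * (((1 : Matrix (Fin n) (Fin n) 𝒜) ⊗ₖ D) * (RAinv k 𝒜 q n * ((A ⊗ₖ (1 : Matrix (Fin n) (Fin n) 𝒜)) * ((1 : Matrix (Fin m) (Fin m) 𝒜) ⊗ₖ A)))))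
                = (RA21 k 𝒜 q m * ((D ⊗ₖ (1 : Matrix (Fin m) (Fin m) 𝒜)) * ((1 : Matrix (Fin n) (Fin n) 𝒜) ⊗ₖ D))) * (RAinv k 𝒜 q n * ((A ⊗ₖ (1 : Matrix (Fin n) (Fin n) 𝒜)) * ((1 : Matrix (Fin m) (Fin m) 𝒜) ⊗ₖ A))) from by
              simp only [Matrix.mul_assoc], h2sw]
            simp only [Matrix.mul_assoc]
        _ = ((1 : Matrix (Fin m) (Fin m) 𝒜) ⊗ₖ D) * ((D ⊗ₖ (1 : Matrix (Fin n) (Fin n) 𝒜)) * ((A ⊗ₖ (1 : Matrix (Fin n) (Fin n) 𝒜)) * ((1 : Matrix (Fin m) (Fin m) 𝒜) ⊗ₖ A))) := by rw [cancel2]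
    rw [lhs_eq, rhs_eq]
  have hMm1 : (1 : Matrix (Fin m) (Fin m) 𝒜) ⊗ₖ ((1 : Matrix (Fin m) (Fin m) 𝒜) + (q - q⁻¹) • (D * A)) = 1 + (q - q⁻¹) • ((1 : Matrix (Fin m) (Fin m) 𝒜) ⊗ₖ (D * A)) := by
    rw [Matrix.kronecker_add, Matrix.kronecker_smul, Matrix.one_kronecker_one]
  have hMm2 : ((1 : Matrix (Fin m) (Fin m) 𝒜) + (q - q⁻¹) • (D * A)) ⊗ₖ (1 : Matrix (Fin m) (Fin m) 𝒜) = 1 + (q - q⁻¹) • ((D * A) ⊗ₖ (1 : Matrix (Fin m) (Fin m) 𝒜)) := by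
    rw [Matrix.add_kronecker, Matrix.smul_kronecker, Matrix.one_kronecker_one]
  have hrefl : ((1 : Matrix (Fin m) (Fin m) 𝒜) ⊗ₖ ((1 : Matrix (Fin m) (Fin m) 𝒜) + (q - q⁻¹) • (D * A))) * RA21 k 𝒜 q m * (((1 : Matrix (Fin m) (Fin m) 𝒜) + (q - q⁻¹) • (D * A)) ⊗ₖ (1 : Matrix (Fin m) (Fin m) 𝒜)) * RA k 𝒜 q m
      = RA21 k 𝒜 q m * (((1 : Matrix (Fin m) (Fin m) 𝒜) + (q - q⁻¹) • (D * A)) ⊗ₖ (1 : Matrix (Fin m) (Fin m) 𝒜)) * RA k 𝒜 q m * ((1 : Matrix (Fin m) (Fin m) 𝒜) ⊗ₖ ((1 : Matrix (Fin m) (Fin m) 𝒜) + (q - q⁻¹) • (D * A))) := by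
    rw [hMm1, hMm2]
    simp only [Matrix.mul_assoc]
    rw [← sub_eq_zero]
    rw [show (1 + (q - q⁻¹) • ((1 : Matrix (Fin m) (Fin m) 𝒜) ⊗ₖ (D * A))) * (RA21 k 𝒜 q m * ((1 + (q - q⁻¹) • ((D * A) ⊗ₖ (1 : Matrix (Fin m) (Fin m) 𝒜))) * RA k 𝒜 q m))
          - RA21 k 𝒜 q m * ((1 + (q - q⁻¹) • ((D * A) ⊗ₖ (1 : Matrix (Fin m) (Fin m) 𝒜))) * (RA k 𝒜 q m * (1 + (q - q⁻¹) • ((1 : Matrix (Fin m) (Fin m) 𝒜) ⊗ₖ (D * A)))))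
        = ((q - q⁻¹) • (((1 : Matrix (Fin m) (Fin m) 𝒜) ⊗ₖ (D * A)) * (RA21 k 𝒜 q m * RA k 𝒜 q m)) + ((q - q⁻¹) * (q - q⁻¹)) • (((1 : Matrix (Fin m) (Fin m) 𝒜) ⊗ₖ (D * A)) * (RA21 k 𝒜 q m * (((D * A) ⊗ₖ (1 : Matrix (Fin m) (Fin m) 𝒜)) * RA k 𝒜 q m))))
          - ((q - q⁻¹) • ((RA21 k 𝒜 q m * RA k 𝒜 q m) * ((1 : Matrix (Fin m) (Fin m) 𝒜) ⊗ₖ (D * A))) + ((q - q⁻¹) * (q - q⁻¹)) • (RA21 k 𝒜 q m * (((D * A) ⊗ₖ (1 : Matrix (Fin m) (Fin m) 𝒜)) * (RA k 𝒜 q m * ((1 : Matrix (Fin m) (Fin m) 𝒜) ⊗ₖ (D * A)))))) from by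
      simp only [Matrix.mul_add, Matrix.add_mul, one_mul, mul_one, Matrix.smul_mul, Matrix.mul_smul,
        smul_add, smul_smul, Matrix.mul_assoc]
      abel]
    rw [sub_eq_zero, hecke_A q hq m]
    rw [Matrix.mul_add ((1 : Matrix (Fin m) (Fin m) 𝒜) ⊗ₖ (D * A)), mul_one, Matrix.add_mul _ _ ((1 : Matrix (Fin m) (Fin m) 𝒜) ⊗ₖ (D * A)), one_mul, Matrix.mul_smul, Matrix.smul_mul,
      smul_add, smul_add, smul_smul, smul_smul]
    have hKs : ((q - q⁻¹) * (q - q⁻¹)) • (((1 : Matrix (Fin m) (Fin m) 𝒜) ⊗ₖ (D * A)) * (genFlip 𝒜 (Fin m) (Fin m) * RA k 𝒜 q m)) + ((q - q⁻¹) * (q - q⁻¹)) • (((1 : Matrix (Fin m) (Fin m) 𝒜) ⊗ₖ (D * A)) * (RA21 k 𝒜 q m * (((D * A) ⊗ₖ (1 : Matrix (Fin m) (Fin m) 𝒜)) * RA k 𝒜 q m)))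
        = ((q - q⁻¹) * (q - q⁻¹)) • ((genFlip 𝒜 (Fin m) (Fin m) * RA k 𝒜 q m) * ((1 : Matrix (Fin m) (Fin m) 𝒜) ⊗ₖ (D * A))) + ((q - q⁻¹) * (q - q⁻¹)) • (RA21 k 𝒜 q m * (((D * A) ⊗ₖ (1 : Matrix (Fin m) (Fin m) 𝒜)) * (RA k 𝒜 q m * ((1 : Matrix (Fin m) (Fin m) 𝒜) ⊗ₖ (D * A))))) := by
      rw [← smul_add, ← smul_add, hK]
    rw [add_assoc, add_assoc, hKs]
  refine ⟨hrefl, ?_⟩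
  have hmapgen : (REgen k m).map ⇑(FreeAlgebra.lift k (fun x : Fin m × Fin m => ((1 : Matrix (Fin m) (Fin m) 𝒜) + (q - q⁻¹) • (D * A)) x.1 x.2)) = ((1 : Matrix (Fin m) (Fin m) 𝒜) + (q - q⁻¹) • (D * A)) := by
    ext i j
    exact FreeAlgebra.lift_ι_apply _ _
  have hmapRA : (RA k (FreeAlgebra k (Fin m × Fin m)) q m).map ⇑(FreeAlgebra.lift k (fun x : Fin m × Fin m => ((1 : Matrix (Fin m) (Fin m) 𝒜) + (q - q⁻¹) • (D * A)) x.1 x.2)) = RA k 𝒜 q m := by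
    ext p r
    exact ((FreeAlgebra.lift k (fun x : Fin m × Fin m => ((1 : Matrix (Fin m) (Fin m) 𝒜) + (q - q⁻¹) • (D * A)) x.1 x.2))).commutes _
  have hmapRA21 : (RA21 k (FreeAlgebra k (Fin m × Fin m)) q m).map ⇑(FreeAlgebra.lift k (fun x : Fin m × Fin m => ((1 : Matrix (Fin m) (Fin m) 𝒜) + (q - q⁻¹) • (D * A)) x.1 x.2)) = RA21 k 𝒜 q m := by
    ext p r
    exact ((FreeAlgebra.lift k (fun x : Fin m × Fin m => ((1 : Matrix (Fin m) (Fin m) 𝒜) + (q - q⁻¹) • (D * A)) x.1 x.2))).commutes _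
  have hmm : ∀ (X Y : Matrix (Fin m × Fin m) (Fin m × Fin m) (FreeAlgebra k (Fin m × Fin m))),
      (X * Y).map ⇑(FreeAlgebra.lift k (fun x : Fin m × Fin m => ((1 : Matrix (Fin m) (Fin m) 𝒜) + (q - q⁻¹) • (D * A)) x.1 x.2)) = X.map ⇑(FreeAlgebra.lift k (fun x : Fin m × Fin m => ((1 : Matrix (Fin m) (Fin m) 𝒜) + (q - q⁻¹) • (D * A)) x.1 x.2)) * Y.map ⇑(FreeAlgebra.lift k (fun x : Fin m × Fin m => ((1 : Matrix (Fin m) (Fin m) 𝒜) + (q - q⁻¹) • (D * A)) x.1 x.2)) := by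
    intro X Y
    have h := _root_.map_mul (((FreeAlgebra.lift k (fun x : Fin m × Fin m => ((1 : Matrix (Fin m) (Fin m) 𝒜) + (q - q⁻¹) • (D * A)) x.1 x.2))).mapMatrix) X Y
    simpa [AlgHom.mapMatrix_apply] using h
  have hmap1 : ((1 : Matrix (Fin m) (Fin m) (FreeAlgebra k (Fin m × Fin m))) ⊗ₖ REgen k m).map ⇑(FreeAlgebra.lift k (fun x : Fin m × Fin m => ((1 : Matrix (Fin m) (Fin m) 𝒜) + (q - q⁻¹) • (D * A)) x.1 x.2)) = (1 : Matrix (Fin m) (Fin m) 𝒜) ⊗ₖ ((1 : Matrix (Fin m) (Fin m) 𝒜) + (q - q⁻¹) • (D * A)) := by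
    rw [map_one_kron _ (map_zero _), hmapgen]
  have hmap2 : (REgen k m ⊗ₖ (1 : Matrix (Fin m) (Fin m) (FreeAlgebra k (Fin m × Fin m)))).map ⇑(FreeAlgebra.lift k (fun x : Fin m × Fin m => ((1 : Matrix (Fin m) (Fin m) 𝒜) + (q - q⁻¹) • (D * A)) x.1 x.2)) = ((1 : Matrix (Fin m) (Fin m) 𝒜) + (q - q⁻¹) • (D * A)) ⊗ₖ (1 : Matrix (Fin m) (Fin m) 𝒜) := by
    rw [map_kron_one _ (map_zero _), hmapgen]
  have hcompat : ∀ ⦃x y : FreeAlgebra k (Fin m × Fin m)⦄, RERel k q m x y → ((FreeAlgebra.lift k (fun x : Fin m × Fin m => ((1 : Matrix (Fin m) (Fin m) 𝒜) + (q - q⁻¹) • (D * A)) x.1 x.2))) x = ((FreeAlgebra.lift k (fun x : Fin m × Fin m => ((1 : Matrix (Fin m) (Fin m) 𝒜) + (q - q⁻¹) • (D * A)) x.1 x.2))) y := by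
    rintro x y ⟨p, r, rfl, rfl⟩
    show (((1 : Matrix (Fin m) (Fin m) (FreeAlgebra k (Fin m × Fin m))) ⊗ₖ REgen k m) * RA21 k (FreeAlgebra k (Fin m × Fin m)) q m * (REgen k m ⊗ₖ (1 : Matrix (Fin m) (Fin m) (FreeAlgebra k (Fin m × Fin m))))
        * RA k (FreeAlgebra k (Fin m × Fin m)) q m).map ⇑(FreeAlgebra.lift k (fun x : Fin m × Fin m => ((1 : Matrix (Fin m) (Fin m) 𝒜) + (q - q⁻¹) • (D * A)) x.1 x.2)) p r
      = ((RA21 k (FreeAlgebra k (Fin m × Fin m)) q m) * (REgen k m ⊗ₖ (1 : Matrix (Fin m) (Fin m) (FreeAlgebra k (Fin m × Fin m)))) * RA k (FreeAlgebra k (Fin m × Fin m)) q m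
        * ((1 : Matrix (Fin m) (Fin m) (FreeAlgebra k (Fin m × Fin m))) ⊗ₖ REgen k m)).map ⇑(FreeAlgebra.lift k (fun x : Fin m × Fin m => ((1 : Matrix (Fin m) (Fin m) 𝒜) + (q - q⁻¹) • (D * A)) x.1 x.2)) p r
    rw [hmm, hmm, hmm, hmm, hmm, hmm, hmap1, hmap2, hmapRA, hmapRA21, hrefl]
  refine ⟨RingQuot.liftAlgHom k ⟨(FreeAlgebra.lift k (fun x : Fin m × Fin m => ((1 : Matrix (Fin m) (Fin m) 𝒜) + (q - q⁻¹) • (D * A)) x.1 x.2)), hcompat⟩, ?_⟩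
  intro i j
  exact (RingQuot.liftAlgHom_mkAlgHom_apply k _ hcompat _).trans (FreeAlgebra.lift_ι_apply _ _)
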